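/- arXiv:1405.3595 — 3 statements merged into one kernel-verified Lean document; each statement's English description precedes it below -/
import Mathlib

section
/- Let ABCD be a quadrilateral in the plane, and let U ∈ line BC and V ∈ line AD be arbitrary points. Set M = BV ∩ AC and N = AU ∩ BD. Then the three lines MN, CD, and UV are concurrent (or all parallel). -/
/-!
Write `[a, b, c]` (`bracket`) for the determinant of three homogeneous coordinate vectors.
Expanding the meets `M = (B × v) × (A × C)` and `N = (A × u) × (B × D)`, the determinant of the
three lines `MN`, `CD`, `uv` satisfies the polynomial identity
`[MN, CD, uv] = -([A,B,v] [A,D,u] [C,D,v] [B,C,u] + [C,B,v] [A,B,u] [C,D,u] [A,D,v])`.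
The incidences `u ∈ BC` and `v ∈ AD` kill both terms, so the three lines are linearly
dependent covectors, and a nonzero vector in the kernel of the matrix they form is their
common point.
-/

open Matrix

noncomputable section

/-- A point (or line) of the real projective plane, represented by a vector of
homogeneous coordinates in `ℝ³`. -/
abbrev PPt : Type := Fin 3 → ℝ

/-- The cross product: used both for the join of two points (giving the line through
them as a covector) and for the meet of two lines (giving their intersection point). -/
def pcross (a b : PPt) : PPt := crossProduct a b

/-- Three points (or three lines) are collinear (resp. concurrent) iff the determinant
of their homogeneous coordinates vanishes. -/
def collin (a b c : PPt) : Prop := Matrix.det (Matrix.of ![a, b, c]) = 0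

def bracket (a b c : PPt) : ℝ := (Matrix.of ![a, b, c]).det

theorem bracket_eq (a b c : PPt) :
    bracket a b c =
      a 0 * b 1 * c 2 - a 0 * b 2 * c 1 - a 1 * b 0 * c 2 + a 1 * b 2 * c 0
        + a 2 * b 0 * c 1 - a 2 * b 1 * c 0 := by
  simp [bracket, det_fin_three]

theorem pcross_apply_zero (a b : PPt) : pcross a b 0 = a 1 * b 2 - a 2 * b 1 := rfl

theorem pcross_apply_one (a b : PPt) : pcross a b 1 = a 2 * b 0 - a 0 * b 2 := rfl

theorem pcross_apply_two (a b : PPt) : pcross a b 2 = a 0 * b 1 - a 1 * b 0 := rfl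

theorem collin_iff_pcross_dotProduct {a b c : PPt} : collin a b c ↔ pcross a b ⬝ᵥ c = 0 := by
  rw [collin, dotProduct_comm, pcross, triple_product_permutation, triple_product_eq_det]
  rfl

theorem exists_common_point_of_bracket_eq_zero {l m n : PPt} (h : bracket l m n = 0) :
    ∃ P : PPt, P ≠ 0 ∧ l ⬝ᵥ P = 0 ∧ m ⬝ᵥ P = 0 ∧ n ⬝ᵥ P = 0 := by
  obtain ⟨P, hP0, hP⟩ := Matrix.exists_mulVec_eq_zero_iff.mpr h
  exact ⟨P, hP0, congrFun hP 0, congrFun hP 1, congrFun hP 2⟩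

theorem bracket_sharygin_lines (A B C D u v : PPt) :
    bracket (pcross (pcross (pcross B v) (pcross A C)) (pcross (pcross A u) (pcross B D)))
        (pcross C D) (pcross u v) =
      -(bracket A B v * bracket A D u * bracket C D v * bracket B C u
        + bracket C B v * bracket A B u * bracket C D u * bracket A D v) := by
  simp only [bracket_eq, pcross_apply_zero, pcross_apply_one, pcross_apply_two]
  ring

theorem sharygin_projective_general (A B C D u v M N : PPt)
    (hu : collin B C u)
    (hv : collin A D v)
    (hM : M = pcross (pcross B v) (pcross A C))
    (hN : N = pcross (pcross A u) (pcross B D)) :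
    ∃ P : PPt, P ≠ 0 ∧ collin M N P ∧ collin C D P ∧ collin u v P := by
  have hlines : bracket (pcross M N) (pcross C D) (pcross u v) = 0 := by
    rw [hM, hN, bracket_sharygin_lines, show bracket B C u = 0 from hu,
      show bracket A D v = 0 from hv]
    ring
  obtain ⟨P, hP0, hMN, hCD, huv⟩ := exists_common_point_of_bracket_eq_zero hlines
  exact ⟨P, hP0, collin_iff_pcross_dotProduct.mpr hMN, collin_iff_pcross_dotProduct.mpr hCD,
    collin_iff_pcross_dotProduct.mpr huv⟩

/-- **Sharygin's problem, projective version.** Let `A B C D` be four points, no three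
collinear, `u ∈ BC` and `v ∈ AD` arbitrary points, `M = Bv ∩ AC`, `N = Au ∩ BD`.
Then the lines `MN`, `CD` and `uv` are concurrent. -/
theorem sharygin_projective (A B C D u v M N : PPt)
    (hABC : ¬ collin A B C) (hABD : ¬ collin A B D)
    (hACD : ¬ collin A C D) (hBCD : ¬ collin B C D)
    (hu0 : u ≠ 0) (hu : collin B C u)
    (hv0 : v ≠ 0) (hv : collin A D v)
    (hM : M = pcross (pcross B v) (pcross A C))
    (hN : N = pcross (pcross A u) (pcross B D))
    (hM0 : M ≠ 0) (hN0 : N ≠ 0)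
    (hMN : pcross M N ≠ 0) (huv : pcross u v ≠ 0) :
    ∃ P : PPt, P ≠ 0 ∧ collin M N P ∧ collin C D P ∧ collin u v P :=
  sharygin_projective_general A B C D u v M N hu hv hM hN
end
end

section
/- Let (A₁A₂A₃A₄, g) be a (q,l)-pair and let k_ij be the Sharygin conic through A_i, A_j and the four Sharygin points M_ij^k, M_ij^s, M_ji^k, M_ji^s associated with the vertices A_i, A_j. Then the pole of the line g with respect to k_ij is the point G_ij = A_iA_j ∩ M_ij^k M_ij^s. -/
open Matrix

noncomputable section

/-- No three of the four vertices are collinear (in particular all are nonzero). -/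
def Nondeg4 (A : Fin 4 → PPt) : Prop :=
  ∀ p q r : Fin 4, p ≠ q → p ≠ r → q ≠ r → ¬ collin (A p) (A q) (A r)

/-- `(A, g)` is a (q,l)-pair: a complete quadrangle `A 0, A 1, A 2, A 3` (no three
vertices collinear) together with a line `g` not incident with any vertex and not
incident with any of the three diagonal points. -/
def QLPair (A : Fin 4 → PPt) (g : PPt) : Prop :=
  g ≠ 0 ∧ Nondeg4 A ∧ (∀ p : Fin 4, A p ⬝ᵥ g ≠ 0) ∧
    (pcross (pcross (A 0) (A 1)) (pcross (A 2) (A 3))) ⬝ᵥ g ≠ 0 ∧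
    (pcross (pcross (A 0) (A 2)) (pcross (A 1) (A 3))) ⬝ᵥ g ≠ 0 ∧
    (pcross (pcross (A 0) (A 3)) (pcross (A 1) (A 2))) ⬝ᵥ g ≠ 0

/-- `U A g p q` is the point `U_pq = g ∩ A_pA_q`. -/
def U (A : Fin 4 → PPt) (g : PPt) (p q : Fin 4) : PPt :=
  pcross (pcross (A p) (A q)) g

/-- The point `p` lies on the conic defined by the quadratic form with matrix `Q`. -/
def OnConic (Q : Matrix (Fin 3) (Fin 3) ℝ) (p : PPt) : Prop := p ⬝ᵥ (Q *ᵥ p) = 0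

/-! The four points `A_i, A_j, M_ij^k, M_ij^s` form a quadrangle inscribed in `k_ij`, so its
diagonal points are pairwise conjugate. `G_ij` is one of them, and the other two are
`A_iM_ij^k ∩ A_jM_ij^s = U_js` and `A_iM_ij^s ∩ A_jM_ij^k = U_jk`. Hence the polar of `G_ij`
passes through the two distinct points `U_js, U_jk` of `g`, i.e. it is `g`. -/

section CrossProduct

variable {R : Type*} [CommRing R]

theorem cross_cross_cross_self_left (x y z : Fin 3 → R) :
    x ⨯₃ (x ⨯₃ y ⨯₃ z) = (x ⬝ᵥ z) • x ⨯₃ y := by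
  rw [cross_cross_eq_smul_sub_smul', dotProduct_comm (x ⨯₃ y), dot_self_cross, zero_smul,
    sub_zero, dotProduct_comm]

theorem cross_cross_self_cross (x y z : Fin 3 → R) :
    x ⨯₃ (y ⨯₃ (x ⨯₃ z)) = -(x ⬝ᵥ y) • x ⨯₃ z := by
  rw [cross_cross_eq_smul_sub_smul', dot_self_cross, zero_smul, zero_sub, dotProduct_comm,
    neg_smul]

theorem cross_cross_cross_self_right (x y z : Fin 3 → R) :
    x ⨯₃ (y ⨯₃ z) ⨯₃ y = (x ⬝ᵥ y) • y ⨯₃ z := by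
  rw [cross_cross_eq_smul_sub_smul, dotProduct_comm (y ⨯₃ z), dot_self_cross, zero_smul,
    sub_zero]

theorem dot_cross_cross_self_cross (x y z w : Fin 3 → R) :
    x ⬝ᵥ y ⨯₃ (x ⨯₃ z ⨯₃ w) = (x ⬝ᵥ w) * (x ⬝ᵥ y ⨯₃ z) := by
  rw [cross_cross_eq_smul_sub_smul, map_sub, map_smul, map_smul, dotProduct_sub,
    dotProduct_smul, dotProduct_smul, dot_cross_self, smul_zero, sub_zero, smul_eq_mul]

theorem cross_cross_cross_cross_right (x y z : Fin 3 → R) :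
    x ⨯₃ z ⨯₃ (y ⨯₃ z) = (x ⬝ᵥ y ⨯₃ z) • z := by
  rw [cross_cross_eq_smul_sub_smul, dot_cross_self, zero_smul, sub_zero]

/-- With `a, b, c, d = A_i, A_j, A_k, A_s` this is `M_ij^k = A_iU_js ∩ A_jA_k`. -/
def sharyginPoint (a b c d g : Fin 3 → R) : Fin 3 → R :=
  a ⨯₃ (b ⨯₃ d ⨯₃ g) ⨯₃ (b ⨯₃ c)

theorem cross_sharyginPoint_cross_cross_sharyginPoint (a b c d g : Fin 3 → R) :
    a ⨯₃ sharyginPoint a b c d g ⨯₃ (b ⨯₃ sharyginPoint a b d c g) =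
      ((a ⬝ᵥ b ⨯₃ c) * -((b ⬝ᵥ g) * (b ⬝ᵥ a ⨯₃ c)) * (a ⬝ᵥ b ⨯₃ d)) • (b ⨯₃ d ⨯₃ g) := by
  have hjoin_a : a ⨯₃ sharyginPoint a b c d g = (a ⬝ᵥ b ⨯₃ c) • a ⨯₃ (b ⨯₃ d ⨯₃ g) :=
    cross_cross_cross_self_left _ _ _
  have hjoin_b : b ⨯₃ sharyginPoint a b d c g = -((b ⬝ᵥ g) * (b ⬝ᵥ a ⨯₃ c)) • b ⨯₃ d := by
    rw [sharyginPoint, cross_cross_self_cross, dot_cross_cross_self_cross]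
  rw [hjoin_a, hjoin_b, map_smul, map_smul, LinearMap.smul_apply, cross_cross_cross_self_right,
    smul_smul, smul_smul, mul_comm _ (a ⬝ᵥ b ⨯₃ c)]

end CrossProduct

section Field

variable {K : Type*} [Field K]

theorem exists_eq_smul_of_cross_eq_zero {v w : Fin 3 → K} (hw : w ≠ 0) (h : v ⨯₃ w = 0) :
    ∃ t : K, v = t • w := by
  have hdep : ¬LinearIndependent K ![w, v] := by
    rw [← crossProduct_ne_zero_iff_linearIndependent, ← cross_anticomm, h, neg_zero]
    exact not_not.mpr rfl
  obtain ⟨t, ht⟩ := not_forall_not.mp ((LinearIndependent.pair_iff' hw).not.mp hdep)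
  exact ⟨t, ht.symm⟩

theorem exists_eq_smul_of_cross_dotProduct_eq_zero {m m' g v : Fin 3 → K}
    (hmm' : m ⬝ᵥ m' ⨯₃ g ≠ 0) (hm : m ⨯₃ g ⬝ᵥ v = 0) (hm' : m' ⨯₃ g ⬝ᵥ v = 0) :
    ∃ t : K, v = t • g := by
  have hg : g ≠ 0 := by
    rintro rfl
    simp at hmm'
  have hvg : (m ⬝ᵥ m' ⨯₃ g) • v ⨯₃ g = 0 := by
    rw [← map_smul, ← cross_cross_cross_cross_right, cross_cross_eq_smul_sub_smul',
      dotProduct_comm v, hm, hm', zero_smul, zero_smul, sub_zero]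
  exact exists_eq_smul_of_cross_eq_zero hg ((smul_eq_zero.mp hvg).resolve_left hmm')

theorem diagonal_points_conjugate [NeZero (2 : K)] {Q : Matrix (Fin 3) (Fin 3) K}
    (hQ : Q.IsSymm) {a b p q : Fin 3 → K}
    (ha : a ⬝ᵥ Q *ᵥ a = 0) (hb : b ⬝ᵥ Q *ᵥ b = 0) (hp : p ⬝ᵥ Q *ᵥ p = 0)
    (hq : q ⬝ᵥ Q *ᵥ q = 0) :
    a ⨯₃ p ⨯₃ (b ⨯₃ q) ⬝ᵥ Q *ᵥ (a ⨯₃ b ⨯₃ (p ⨯₃ q)) = 0 := by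
  have h10 : Q 1 0 = Q 0 1 := hQ.apply 0 1
  have h20 : Q 2 0 = Q 0 2 := hQ.apply 0 2
  have h21 : Q 2 1 = Q 1 2 := hQ.apply 1 2
  refine (mul_eq_zero.mp ?_).resolve_left (two_ne_zero (α := K))
  linear_combination (norm := skip) -(b ⬝ᵥ p ⨯₃ q) ^ 2 * ha + (a ⬝ᵥ p ⨯₃ q) ^ 2 * hb
    + (a ⬝ᵥ b ⨯₃ q) ^ 2 * hp - (a ⬝ᵥ b ⨯₃ p) ^ 2 * hq
  simp only [vec3_dotProduct, cross_apply, mulVec, cons_val_zero, cons_val_one, cons_val,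
    h10, h20, h21]
  ring

theorem sharyginPoint_conjugate [NeZero (2 : K)] {Q : Matrix (Fin 3) (Fin 3) K}
    (hQ : Q.IsSymm) {a b c d g : Fin 3 → K}
    (ha : a ⬝ᵥ Q *ᵥ a = 0) (hb : b ⬝ᵥ Q *ᵥ b = 0)
    (hM : sharyginPoint a b c d g ⬝ᵥ Q *ᵥ sharyginPoint a b c d g = 0)
    (hM' : sharyginPoint a b d c g ⬝ᵥ Q *ᵥ sharyginPoint a b d c g = 0)
    (hbg : b ⬝ᵥ g ≠ 0) (habc : a ⬝ᵥ b ⨯₃ c ≠ 0) (habd : a ⬝ᵥ b ⨯₃ d ≠ 0)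
    (hbac : b ⬝ᵥ a ⨯₃ c ≠ 0) :
    b ⨯₃ d ⨯₃ g ⬝ᵥ
      Q *ᵥ (a ⨯₃ b ⨯₃ (sharyginPoint a b c d g ⨯₃ sharyginPoint a b d c g)) = 0 := by
  have h := diagonal_points_conjugate hQ ha hb hM hM'
  rw [cross_sharyginPoint_cross_cross_sharyginPoint, smul_dotProduct, smul_eq_mul] at h
  refine (mul_eq_zero.mp h).resolve_left ?_
  exact mul_ne_zero (mul_ne_zero habc (neg_ne_zero.mpr (mul_ne_zero hbg hbac))) habd

end Field

theorem Gij_pole_of_g_general (A : Fin 4 → PPt) (g : PPt) (i j k s : Fin 4)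
    (hij : i ≠ j) (hik : i ≠ k) (his : i ≠ s) (hjk : j ≠ k) (hjs : j ≠ s) (hks : k ≠ s)
    (hql : QLPair A g)
    (Mijk Mijs G : PPt)
    (hMijk : Mijk = pcross (pcross (A i) (U A g j s)) (pcross (A j) (A k)))
    (hMijs : Mijs = pcross (pcross (A i) (U A g j k)) (pcross (A j) (A s)))
    (Qm : Matrix (Fin 3) (Fin 3) ℝ) (hsymm : Qm.IsSymm) (hdet : Qm.det ≠ 0)
    (hAi : OnConic Qm (A i)) (hAj : OnConic Qm (A j))
    (h1 : OnConic Qm Mijk)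
    (h3 : OnConic Qm Mijs)
    (hG : G = pcross (pcross (A i) (A j)) (pcross Mijk Mijs))
    (hG0 : G ≠ 0) :
    ∃ t : ℝ, t ≠ 0 ∧ Qm *ᵥ G = t • g := by
  obtain ⟨-, hA, hAg, -⟩ := hql
  have htriple {p q r : Fin 4} (hpq : p ≠ q) (hpr : p ≠ r) (hqr : q ≠ r) :
      A p ⬝ᵥ A q ⨯₃ A r ≠ 0 := fun h ↦
    hA p q r hpq hpr hqr ((triple_product_eq_det _ _ _).symm.trans h)
  subst hMijk hMijs
  have hG' : G = A i ⨯₃ A j ⨯₃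
      (sharyginPoint (A i) (A j) (A k) (A s) g ⨯₃ sharyginPoint (A i) (A j) (A s) (A k) g) := hG
  have hUjs : A j ⨯₃ A s ⨯₃ g ⬝ᵥ Qm *ᵥ G = 0 := hG' ▸ sharyginPoint_conjugate hsymm hAi hAj h1 h3
    (hAg j) (htriple hij hik hjk) (htriple hij his hjs) (htriple hij.symm hjk hik)
  have hUjk : A j ⨯₃ A k ⨯₃ g ⬝ᵥ Qm *ᵥ G = 0 := by
    have h := sharyginPoint_conjugate hsymm hAi hAj h3 h1
      (hAg j) (htriple hij his hjs) (htriple hij hik hjk) (htriple hij.symm hjs his)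
    rwa [← cross_anticomm (sharyginPoint _ _ _ _ _), map_neg, mulVec_neg,
      dotProduct_neg, neg_eq_zero, ← hG'] at h
  have hnot_concurrent : A j ⨯₃ A s ⬝ᵥ A j ⨯₃ A k ⨯₃ g ≠ 0 := by
    rw [cross_dot_cross, dot_self_cross, zero_mul, zero_sub, neg_ne_zero]
    exact mul_ne_zero (hAg j) (htriple hjs.symm hks.symm hjk)
  obtain ⟨t, ht⟩ := exists_eq_smul_of_cross_dotProduct_eq_zero hnot_concurrent hUjs hUjk
  refine ⟨t, ?_, ht⟩
  rintro rfl
  exact hG0 (eq_zero_of_mulVec_eq_zero hdet (by rw [ht, zero_smul]))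

/-- **Proposition 3.** For a (q,l)-pair `(A, g)`, the pole of the line `g` with
respect to the (nondegenerate) Sharygin conic `k_ij` through `A_i`, `A_j` and the
four Sharygin points is the point `G_ij = A_iA_j ∩ M_ij^k M_ij^s`. -/
theorem Gij_pole_of_g (A : Fin 4 → PPt) (g : PPt) (i j k s : Fin 4)
    (hij : i ≠ j) (hik : i ≠ k) (his : i ≠ s) (hjk : j ≠ k) (hjs : j ≠ s) (hks : k ≠ s)
    (hql : QLPair A g)
    (Mijk Mjis Mijs Mjik G : PPt)
    (hMijk : Mijk = pcross (pcross (A i) (U A g j s)) (pcross (A j) (A k)))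
    (hMjis : Mjis = pcross (pcross (A j) (U A g i k)) (pcross (A i) (A s)))
    (hMijs : Mijs = pcross (pcross (A i) (U A g j k)) (pcross (A j) (A s)))
    (hMjik : Mjik = pcross (pcross (A j) (U A g i s)) (pcross (A i) (A k)))
    (Qm : Matrix (Fin 3) (Fin 3) ℝ) (hsymm : Qm.IsSymm) (hdet : Qm.det ≠ 0)
    (hAi : OnConic Qm (A i)) (hAj : OnConic Qm (A j))
    (h1 : OnConic Qm Mijk) (h2 : OnConic Qm Mjis)
    (h3 : OnConic Qm Mijs) (h4 : OnConic Qm Mjik)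
    (hG : G = pcross (pcross (A i) (A j)) (pcross Mijk Mijs))
    (hG0 : G ≠ 0) :
    ∃ t : ℝ, t ≠ 0 ∧ Qm *ᵥ G = t • g :=
  Gij_pole_of_g_general A g i j k s hij hik his hjk hjs hks hql Mijk Mijs G hMijk hMijs Qm hsymm
    hdet hAi hAj h1 h3 hG hG0
end
end

section
/- Let (A₁A₂A₃A₄, g) be a (q,l)-pair with nine-point conic k (through the six G-points and three diagonal points), assumed nondegenerate. Then the three lines G₁₂G₃₄, G₁₃G₂₄, G₁₄G₂₃ are concurrent, and their common point G is the pole of the line g with respect to k. -/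
open Matrix

noncomputable section

/-- `x` and `y` are harmonic conjugates with respect to `a` and `b`: writing
`x = α • a + β • b` and `y = γ • a + δ • b`, the cross-ratio `(a, b; x, y)` is `-1`,
i.e. `α * δ + β * γ = 0`. -/
def HarmonicConj (a b x y : PPt) : Prop :=
  ∃ α β γ δ : ℝ, (α, β) ≠ (0, 0) ∧ (γ, δ) ≠ (0, 0) ∧
    x = α • a + β • b ∧ y = γ • a + δ • b ∧ α * δ + β * γ = 0

/-! In the affine chart in which `g` is the line at infinity, the harmonic conjugate of the
point at infinity of `A_pA_q` is the midpoint `G_pq` of `A_pA_q`, so the three lines joining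
opposite midpoints all pass through the centroid `G` of the vertices. Writing each `G_pq` as
`B_p + B_q`, where `B_p` is the representative of `A_p` with `B_p ⬝ᵥ g = 1`, the conic equations
at the six midpoints say that the polarity pairs `G` with every `B_p` to the same value, so the
polar of `G` is `g`: the centroid is the centre of the conic. -/

section QuadraticForm

variable {R n : Type*} [CommRing R] [Fintype n] {Q : Matrix n n R}

theorem Matrix.IsSymm.dotProduct_mulVec_comm (hQ : Q.IsSymm) (x y : n → R) :
    x ⬝ᵥ Q *ᵥ y = y ⬝ᵥ Q *ᵥ x := by
  simpa only [hQ.eq] using dotProduct_transpose_mulVec Q x y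

theorem Matrix.IsSymm.add_dotProduct_mulVec_add (hQ : Q.IsSymm) (x y : n → R) :
    (x + y) ⬝ᵥ Q *ᵥ (x + y) = x ⬝ᵥ Q *ᵥ x + 2 * (x ⬝ᵥ Q *ᵥ y) + y ⬝ᵥ Q *ᵥ y := by
  simp only [mulVec_add, dotProduct_add, add_dotProduct, hQ.dotProduct_mulVec_comm y x]
  ring

theorem Matrix.IsSymm.two_mul_dotProduct_mulVec_sum (hQ : Q.IsSymm) {v : Fin 4 → n → R}
    (h01 : (v 0 + v 1) ⬝ᵥ Q *ᵥ (v 0 + v 1) = 0) (h02 : (v 0 + v 2) ⬝ᵥ Q *ᵥ (v 0 + v 2) = 0)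
    (h03 : (v 0 + v 3) ⬝ᵥ Q *ᵥ (v 0 + v 3) = 0) (h12 : (v 1 + v 2) ⬝ᵥ Q *ᵥ (v 1 + v 2) = 0)
    (h13 : (v 1 + v 3) ⬝ᵥ Q *ᵥ (v 1 + v 3) = 0) (h23 : (v 2 + v 3) ⬝ᵥ Q *ᵥ (v 2 + v 3) = 0)
    (i : Fin 4) :
    2 * (v i ⬝ᵥ Q *ᵥ ∑ j, v j) = -∑ j, v j ⬝ᵥ Q *ᵥ v j := by
  simp only [hQ.add_dotProduct_mulVec_add] at h01 h02 h03 h12 h13 h23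
  have symm := hQ.dotProduct_mulVec_comm
  simp only [Fin.sum_univ_four, mulVec_add, dotProduct_add]
  fin_cases i <;> simp only [Fin.zero_eta, Fin.mk_one, Fin.reduceFinMk, Fin.isValue]
  · linear_combination h01 + h02 + h03
  · linear_combination h01 + h12 + h13 + 2 * symm (v 1) (v 0)
  · linear_combination h02 + h12 + h23 + 2 * symm (v 2) (v 0) + 2 * symm (v 2) (v 1)
  · linear_combination h03 + h13 + h23 + 2 * symm (v 3) (v 0) + 2 * symm (v 3) (v 1) +
      2 * symm (v 3) (v 2)

end QuadraticForm

theorem pcross_pcross (a b g : PPt) : pcross (pcross a b) g = (a ⬝ᵥ g) • b - (b ⬝ᵥ g) • a :=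
  cross_cross_eq_smul_sub_smul a b g

theorem collin_smul_smul_add (μ ν : ℝ) (u v : PPt) : collin (μ • u) (ν • v) (u + v) := by
  simp only [collin, det_fin_three, of_apply, cons_val', cons_val_zero, cons_val_one,
    cons_val_two, tail_cons, empty_val', cons_val_fin_one, vecHead, Pi.smul_apply,
    Pi.add_apply, smul_eq_mul]
  ring

theorem collin_smul_smul_smul_iff {a b c : PPt} {s t u : ℝ} (hs : s ≠ 0) (ht : t ≠ 0)
    (hu : u ≠ 0) : collin (s • a) (t • b) (u • c) ↔ collin a b c := by
  have hrows : of ![s • a, t • b, u • c] = of fun i j => ![s, t, u] i * of ![a, b, c] i j := by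
    ext i j
    fin_cases i <;> rfl
  rw [collin, collin, hrows, det_mul_column]
  simp [Fin.prod_univ_three, hs, ht, hu]

theorem linearIndependent_pair_of_not_collin {a b c : PPt} (h : ¬ collin a b c) :
    LinearIndependent ℝ ![a, b] := by
  have habc : LinearIndependent ℝ ![a, b, c] := linearIndependent_rows_of_det_ne_zero h
  convert habc.comp ![0, 1] (by decide) using 1
  ext i
  fin_cases i <;> rfl

theorem Nondeg4.linearIndependent_pair {A : Fin 4 → PPt} (hA : Nondeg4 A) {p q : Fin 4}
    (hpq : p ≠ q) : LinearIndependent ℝ ![A p, A q] := by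
  obtain ⟨r, hrp, hrq⟩ : ∃ r : Fin 4, r ≠ p ∧ r ≠ q := by
    revert p q
    decide
  exact linearIndependent_pair_of_not_collin (hA p q r hpq hrp.symm hrq.symm)

theorem onConic_smul_iff {Q : Matrix (Fin 3) (Fin 3) ℝ} {μ : ℝ} (hμ : μ ≠ 0) (x : PPt) :
    OnConic Q (μ • x) ↔ OnConic Q x := by
  simp [OnConic, mulVec_smul, hμ]

-- Independence pins `y` down as `-t • a + s • b`, so the harmonic condition reads `α * s = β * t`.
theorem HarmonicConj.exists_eq_smul_inv_add {a b x : PPt} {s t : ℝ}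
    (hab : LinearIndependent ℝ ![a, b]) (hs : s ≠ 0) (ht : t ≠ 0)
    (h : HarmonicConj a b x (s • b - t • a)) :
    ∃ μ : ℝ, μ ≠ 0 ∧ x = μ • (s⁻¹ • a + t⁻¹ • b) := by
  obtain ⟨α, β, γ, δ, hαβ, -, rfl, hy, hαβγδ⟩ := h
  obtain ⟨hγ, hδ⟩ := LinearIndependent.pair_iff.mp hab (γ + t) (δ - s) (by
    linear_combination (norm := module) -hy)
  have hβ : β = α * s / t := by
    field_simp
    linear_combination -hαβγδ + α * hδ + β * hγ
  refine ⟨α * s, fun hαs => hαβ ?_, ?_⟩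
  · have hα : α = 0 := (mul_eq_zero.mp hαs).resolve_right hs
    simp [hα, hβ]
  · rw [hβ]
    match_scalars <;> field_simp

def affineRep (g x : PPt) : PPt := (x ⬝ᵥ g)⁻¹ • x

theorem affineRep_dotProduct {g x : PPt} (hx : x ⬝ᵥ g ≠ 0) : affineRep g x ⬝ᵥ g = 1 := by
  rw [affineRep, smul_dotProduct, smul_eq_mul, inv_mul_cancel₀ hx]

theorem HarmonicConj.exists_eq_smul_affineRep_add {a b x g : PPt}
    (hab : LinearIndependent ℝ ![a, b]) (ha : a ⬝ᵥ g ≠ 0) (hb : b ⬝ᵥ g ≠ 0)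
    (h : HarmonicConj a b x (pcross (pcross a b) g)) :
    ∃ μ : ℝ, μ ≠ 0 ∧ x = μ • (affineRep g a + affineRep g b) := by
  rw [pcross_pcross] at h
  exact h.exists_eq_smul_inv_add hab ha hb

theorem QLPair.exists_eq_smul_affineRep_add {A : Fin 4 → PPt} {g x : PPt} (hql : QLPair A g)
    {p q : Fin 4} (hpq : p ≠ q) (hx : HarmonicConj (A p) (A q) x (U A g p q)) :
    ∃ μ : ℝ, μ ≠ 0 ∧ x = μ • (affineRep g (A p) + affineRep g (A q)) :=
  hx.exists_eq_smul_affineRep_add (hql.2.1.linearIndependent_pair hpq) (hql.2.2.1 p) (hql.2.2.1 q)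

theorem QLPair.not_collin_affineRep {A : Fin 4 → PPt} {g : PPt} (hql : QLPair A g) :
    ¬ collin (affineRep g (A 0)) (affineRep g (A 1)) (affineRep g (A 2)) := by
  rw [affineRep, affineRep, affineRep, collin_smul_smul_smul_iff (inv_ne_zero (hql.2.2.1 0))
    (inv_ne_zero (hql.2.2.1 1)) (inv_ne_zero (hql.2.2.1 2))]
  exact hql.2.1 0 1 2 (by decide) (by decide) (by decide)

theorem mulVec_sum_eq_smul_of_onConic {Q : Matrix (Fin 3) (Fin 3) ℝ} (hQ : Q.IsSymm)
    {g : PPt} {v : Fin 4 → PPt} (hv : ∀ i, v i ⬝ᵥ g = 1) (hbasis : ¬ collin (v 0) (v 1) (v 2))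
    (h01 : OnConic Q (v 0 + v 1)) (h02 : OnConic Q (v 0 + v 2)) (h03 : OnConic Q (v 0 + v 3))
    (h12 : OnConic Q (v 1 + v 2)) (h13 : OnConic Q (v 1 + v 3)) (h23 : OnConic Q (v 2 + v 3)) :
    Q *ᵥ ∑ i, v i = (-(∑ i, v i ⬝ᵥ Q *ᵥ v i) / 2) • g := by
  have hpolar := hQ.two_mul_dotProduct_mulVec_sum h01 h02 h03 h12 h13 h23
  rw [← sub_eq_zero]
  refine eq_zero_of_mulVec_eq_zero hbasis (funext fun i => ?_)
  have hi (i : Fin 4) : v i ⬝ᵥ (Q *ᵥ ∑ j, v j - (-(∑ j, v j ⬝ᵥ Q *ᵥ v j) / 2) • g) = 0 := by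
    rw [dotProduct_sub, dotProduct_smul, hv, smul_eq_mul]
    linear_combination hpolar i / 2
  fin_cases i <;> exact hi _

theorem pole_of_nine_point_conic_general (A : Fin 4 → PPt) (g : PPt)
    (hql : QLPair A g)
    (G12 G13 G14 G23 G24 G34 : PPt)
    (hG12 : HarmonicConj (A 0) (A 1) G12 (U A g 0 1))
    (hG13 : HarmonicConj (A 0) (A 2) G13 (U A g 0 2))
    (hG14 : HarmonicConj (A 0) (A 3) G14 (U A g 0 3))
    (hG23 : HarmonicConj (A 1) (A 2) G23 (U A g 1 2))
    (hG24 : HarmonicConj (A 1) (A 3) G24 (U A g 1 3))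
    (hG34 : HarmonicConj (A 2) (A 3) G34 (U A g 2 3))
    (Qm : Matrix (Fin 3) (Fin 3) ℝ) (hsymm : Qm.IsSymm) (hdet : Qm.det ≠ 0)
    (h1 : OnConic Qm G12) (h2 : OnConic Qm G13) (h3 : OnConic Qm G14)
    (h4 : OnConic Qm G23) (h5 : OnConic Qm G24) (h6 : OnConic Qm G34) :
    ∃ G : PPt, G ≠ 0 ∧ collin G12 G34 G ∧ collin G13 G24 G ∧ collin G14 G23 G ∧
      ∃ t : ℝ, t ≠ 0 ∧ Qm *ᵥ G = t • g := by
  set B : Fin 4 → PPt := fun p => affineRep g (A p)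
  obtain ⟨μ12, hμ12, rfl⟩ := hql.exists_eq_smul_affineRep_add (by decide) hG12
  obtain ⟨μ13, hμ13, rfl⟩ := hql.exists_eq_smul_affineRep_add (by decide) hG13
  obtain ⟨μ14, hμ14, rfl⟩ := hql.exists_eq_smul_affineRep_add (by decide) hG14
  obtain ⟨μ23, hμ23, rfl⟩ := hql.exists_eq_smul_affineRep_add (by decide) hG23
  obtain ⟨μ24, hμ24, rfl⟩ := hql.exists_eq_smul_affineRep_add (by decide) hG24
  obtain ⟨μ34, hμ34, rfl⟩ := hql.exists_eq_smul_affineRep_add (by decide) hG34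
  have hBg (p : Fin 4) : B p ⬝ᵥ g = 1 := affineRep_dotProduct (hql.2.2.1 p)
  have hpole := mulVec_sum_eq_smul_of_onConic hsymm hBg hql.not_collin_affineRep
    ((onConic_smul_iff hμ12 _).mp h1) ((onConic_smul_iff hμ13 _).mp h2)
    ((onConic_smul_iff hμ14 _).mp h3) ((onConic_smul_iff hμ23 _).mp h4)
    ((onConic_smul_iff hμ24 _).mp h5) ((onConic_smul_iff hμ34 _).mp h6)
  have hG0 : ∑ p, B p ≠ 0 := fun h0 => by
    simpa [sum_dotProduct, hBg] using congrArg (· ⬝ᵥ g) h0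
  refine ⟨∑ p, B p, hG0, ?_, ?_, ?_, _, fun ht => hG0 ?_, hpole⟩
  · rw [Fin.sum_univ_four, add_assoc]
    exact collin_smul_smul_add _ _ _ _
  · rw [Fin.sum_univ_four, add_assoc, add_add_add_comm]
    exact collin_smul_smul_add _ _ _ _
  · rw [show ∑ p, B p = (B 0 + B 3) + (B 1 + B 2) by rw [Fin.sum_univ_four]; abel]
    exact collin_smul_smul_add _ _ _ _
  · rw [ht, zero_smul] at hpole
    exact eq_zero_of_mulVec_eq_zero hdet hpole

/-- **Theorem 8.** For a (q,l)-pair `(A, g)` with nondegenerate nine-point conic `Qm`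
(through the six `G`-points and the three diagonal points), the lines `G12G34`,
`G13G24`, `G14G23` are concurrent, and their common point `G` is the pole of the
line `g` with respect to the conic. -/
theorem pole_of_nine_point_conic (A : Fin 4 → PPt) (g : PPt)
    (hql : QLPair A g)
    (G12 G13 G14 G23 G24 G34 I I' Ibar : PPt)
    (hG12 : HarmonicConj (A 0) (A 1) G12 (U A g 0 1))
    (hG13 : HarmonicConj (A 0) (A 2) G13 (U A g 0 2))
    (hG14 : HarmonicConj (A 0) (A 3) G14 (U A g 0 3))
    (hG23 : HarmonicConj (A 1) (A 2) G23 (U A g 1 2))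
    (hG24 : HarmonicConj (A 1) (A 3) G24 (U A g 1 3))
    (hG34 : HarmonicConj (A 2) (A 3) G34 (U A g 2 3))
    (hI : I = pcross (pcross (A 0) (A 2)) (pcross (A 1) (A 3)))
    (hI' : I' = pcross (pcross (A 0) (A 3)) (pcross (A 1) (A 2)))
    (hIbar : Ibar = pcross (pcross (A 0) (A 1)) (pcross (A 2) (A 3)))
    (Qm : Matrix (Fin 3) (Fin 3) ℝ) (hsymm : Qm.IsSymm) (hdet : Qm.det ≠ 0)
    (h1 : OnConic Qm G12) (h2 : OnConic Qm G13) (h3 : OnConic Qm G14)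
    (h4 : OnConic Qm G23) (h5 : OnConic Qm G24) (h6 : OnConic Qm G34)
    (h7 : OnConic Qm I) (h8 : OnConic Qm I') (h9 : OnConic Qm Ibar) :
    ∃ G : PPt, G ≠ 0 ∧ collin G12 G34 G ∧ collin G13 G24 G ∧ collin G14 G23 G ∧
      ∃ t : ℝ, t ≠ 0 ∧ Qm *ᵥ G = t • g :=
  pole_of_nine_point_conic_general A g hql G12 G13 G14 G23 G24 G34 hG12 hG13 hG14 hG23 hG24 hG34 Qm
    hsymm hdet h1 h2 h3 h4 h5 h6
end
end
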